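/- Let μ be a probability distribution on subsets of [n] whose generating polynomial g_μ(z) = Σ_S μ(S) Πᵢ∈S zᵢ is log-concave on the positive orthant, and let μ₁,...,μₙ be its marginals. Then H(μ) ≥ Σᵢ₌₁ⁿ μᵢ log(1/μᵢ). -/

import Mathlib

/-- The Shannon entropy of a distribution on subsets of `[n]`
(with the convention `0 · log (1/0) = 0`, automatic since `Real.log 0 = 0`). -/
noncomputable def setEntropy {n : ℕ} (μ : Finset (Fin n) → ℝ) : ℝ :=
  ∑ S : Finset (Fin n), μ S * Real.log (1 / μ S)

/-- The marginal probability `μᵢ = P_{S∼μ}[i ∈ S]`. -/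
noncomputable def marginal {n : ℕ} (μ : Finset (Fin n) → ℝ) (i : Fin n) : ℝ :=
  ∑ S : Finset (Fin n), if i ∈ S then μ S else 0

/-- The multiaffine generating polynomial of `μ`, as a function:
`g_μ(z) = ∑_S μ(S) ∏_{i ∈ S} zᵢ`. -/
noncomputable def genFun {n : ℕ} (μ : Finset (Fin n) → ℝ) (z : Fin n → ℝ) : ℝ :=
  ∑ S : Finset (Fin n), μ S * ∏ i ∈ S, z i

/-!
Since `g_μ(𝟙) = 1` and `∇g_μ(𝟙) = (μ₁, …, μₙ)`, log-concavity of `g_μ` along the segment from `𝟙`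
to `z` puts `log g_μ` below its tangent at `𝟙`: `g_μ(z) ≤ exp (∑ᵢ μᵢ (zᵢ - 1))`. Evaluating at
`zᵢ = 1/μᵢ` for `i ∈ S` and `zᵢ = 0` otherwise, where `g_μ(z) ≥ μ(S) / ∏_{i ∈ S} μᵢ`, gives
`log μ(S) ≤ ∑_{i ∈ S} log μᵢ + |S| - ∑ᵢ μᵢ`. Averaging over `S ∼ μ`, the last two terms cancel
because `E|S| = ∑ᵢ μᵢ`, and what remains is `-H(μ) ≤ ∑ᵢ μᵢ log μᵢ`.
-/

open Finset Real Filter Topology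

def LogConcaveOnOrthant {ι : Type*} (g : (ι → ℝ) → ℝ) : Prop :=
  ∀ v w : ι → ℝ, (∀ i, 0 ≤ v i) → (∀ i, 0 ≤ w i) → ∀ l : ℝ, 0 ≤ l → l ≤ 1 →
    g v ^ l * g w ^ (1 - l) ≤ g (l • v + (1 - l) • w)

theorem le_of_forall_mul_le_of_hasDerivAt {φ : ℝ → ℝ} {c d : ℝ} (hφ : HasDerivAt φ d 0)
    (hφ0 : φ 0 = 0) (h : ∀ l, 0 < l → l ≤ 1 → l * c ≤ φ l) : c ≤ d := by
  have hslope : Tendsto (slope φ 0) (𝓝[>] 0) (𝓝 d) :=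
    (hasDerivAt_iff_tendsto_slope.mp hφ).mono_left (nhdsWithin_mono 0 fun _ hx => ne_of_gt hx)
  refine ge_of_tendsto hslope ?_
  filter_upwards [Ioc_mem_nhdsGT zero_lt_one] with l ⟨hl0, hl1⟩
  rw [slope_def_field, hφ0, sub_zero, sub_zero, le_div_iff₀ hl0, mul_comm]
  exact h l hl0 hl1

theorem le_exp_of_forall_rpow_le_of_hasDerivAt {f : ℝ → ℝ} {y d : ℝ} (hy : 0 < y)
    (hf : HasDerivAt f d 0) (hf0 : f 0 = 1) (h : ∀ l, 0 < l → l ≤ 1 → y ^ l ≤ f l) :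
    y ≤ exp d := by
  rw [← log_le_iff_le_exp hy]
  refine le_of_forall_mul_le_of_hasDerivAt (φ := fun l => log (f l)) ?_ (by simp [hf0])
    fun l hl0 hl1 => ?_
  · simpa [hf0] using hf.log (by simp [hf0])
  · rw [← log_rpow hy]
    exact log_le_log (rpow_pos_of_pos hy l) (h l hl0 hl1)

section

variable {n : ℕ} (μ : Finset (Fin n) → ℝ)

theorem sum_mul_sum_eq_sum_marginal_mul (a : Fin n → ℝ) :
    ∑ S, μ S * ∑ i ∈ S, a i = ∑ i, marginal μ i * a i := by
  simp only [marginal, Finset.sum_mul, ite_mul, zero_mul, Finset.mul_sum]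
  rw [Finset.sum_comm]
  simp [Finset.sum_ite_mem]

theorem sum_mul_card_eq_sum_marginal : ∑ S, μ S * S.card = ∑ i, marginal μ i := by
  simpa using sum_mul_sum_eq_sum_marginal_mul μ 1

theorem le_marginal_of_mem (hnn : ∀ S, 0 ≤ μ S) {i : Fin n} {S : Finset (Fin n)} (hi : i ∈ S) :
    μ S ≤ marginal μ i := by
  simpa [marginal, hi] using Finset.single_le_sum (f := fun T => if i ∈ T then μ T else 0)
    (fun T _ => by split_ifs <;> simp [hnn T]) (Finset.mem_univ S)

theorem mul_prod_le_genFun (hnn : ∀ S, 0 ≤ μ S) {z : Fin n → ℝ} (hz : ∀ i, 0 ≤ z i)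
    (S : Finset (Fin n)) : μ S * ∏ i ∈ S, z i ≤ genFun μ z :=
  Finset.single_le_sum (f := fun T => μ T * ∏ i ∈ T, z i)
    (fun T _ => mul_nonneg (hnn T) (prod_nonneg fun i _ => hz i)) (Finset.mem_univ S)

theorem hasDerivAt_genFun_one_add_smul (v : Fin n → ℝ) :
    HasDerivAt (fun t : ℝ => genFun μ (1 + t • v)) (∑ i, marginal μ i * v i) 0 := by
  rw [← sum_mul_sum_eq_sum_marginal_mul]
  refine HasDerivAt.fun_sum fun S _ => HasDerivAt.const_mul (μ S) ?_
  have := HasDerivAt.fun_finsetProd (u := S) (f := fun i t => 1 + t * v i) (f' := v) (x := (0 : ℝ))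
    fun i _ => by simpa using ((hasDerivAt_id (0 : ℝ)).mul_const (v i)).const_add 1
  simpa using this

theorem genFun_le_exp_of_logConcave (hsum : ∑ S, μ S = 1)
    (hlc : LogConcaveOnOrthant (genFun μ)) {z : Fin n → ℝ} (hz : ∀ i, 0 ≤ z i) :
    genFun μ z ≤ exp (∑ i, marginal μ i * (z i - 1)) := by
  rcases le_or_gt (genFun μ z) 0 with hg | hg
  · exact hg.trans (exp_pos _).le
  have hone : genFun μ 1 = 1 := by simp [genFun, hsum]
  refine le_exp_of_forall_rpow_le_of_hasDerivAt hg (hasDerivAt_genFun_one_add_smul μ (z - 1))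
    (by simpa using hone) fun l hl0 hl1 => ?_
  have h := hlc z 1 hz (fun _ => zero_le_one) l hl0.le hl1
  have hseg : l • z + (1 - l) • (1 : Fin n → ℝ) = 1 + l • (z - 1) := by
    ext i; simp only [Pi.add_apply, Pi.smul_apply, Pi.sub_apply, Pi.one_apply, smul_eq_mul]; ring
  rwa [hone, one_rpow, mul_one, hseg] at h

theorem log_le_sum_log_marginal_add (hnn : ∀ S, 0 ≤ μ S) (hsum : ∑ S, μ S = 1)
    (hlc : LogConcaveOnOrthant (genFun μ)) {S : Finset (Fin n)} (hS : 0 < μ S) :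
    log (μ S) ≤ ∑ i ∈ S, log (marginal μ i) + (S.card - ∑ i, marginal μ i) := by
  have hm : ∀ i ∈ S, 0 < marginal μ i := fun i hi => hS.trans_le (le_marginal_of_mem μ hnn hi)
  set z : Fin n → ℝ := fun i => if i ∈ S then (marginal μ i)⁻¹ else 0
  have hz : ∀ i, 0 ≤ z i := fun i => by
    by_cases hi : i ∈ S
    · simpa [z, hi] using (hm i hi).le
    · simp [z, hi]
  have hprod : ∏ i ∈ S, z i = (∏ i ∈ S, marginal μ i)⁻¹ := by
    rw [← prod_inv_distrib]; exact prod_congr rfl fun i hi => by simp [z, hi]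
  have hexp : ∑ i, marginal μ i * (z i - 1) = S.card - ∑ i, marginal μ i := by
    have : ∀ i, marginal μ i * z i = if i ∈ S then 1 else 0 := fun i => by
      by_cases hi : i ∈ S
      · simp [z, hi, (hm i hi).ne']
      · simp [z, hi]
    simp [mul_sub, sum_sub_distrib, this]
  have hbound : μ S * (∏ i ∈ S, marginal μ i)⁻¹ ≤ exp (S.card - ∑ i, marginal μ i) := by
    rw [← hprod, ← hexp]
    exact (mul_prod_le_genFun μ hnn hz S).trans (genFun_le_exp_of_logConcave μ hsum hlc hz)
  have hP : 0 < ∏ i ∈ S, marginal μ i := prod_pos hm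
  rw [← log_le_iff_le_exp (mul_pos hS (inv_pos.mpr hP)), log_mul hS.ne' (inv_pos.mpr hP).ne',
    log_inv, log_prod fun i hi => (hm i hi).ne'] at hbound
  linarith

end

/-- If the generating polynomial of the probability distribution `μ` on subsets of `[n]`
is log-concave on the positive orthant, then `H(μ) ≥ ∑ᵢ μᵢ log(1/μᵢ)`. -/
theorem setEntropy_ge_of_logConcave
    {n : ℕ} (μ : Finset (Fin n) → ℝ)
    (hnn : ∀ S, 0 ≤ μ S) (hsum : ∑ S : Finset (Fin n), μ S = 1)
    (hlc : ∀ v w : Fin n → ℝ, (∀ i, 0 ≤ v i) → (∀ i, 0 ≤ w i) →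
      ∀ l : ℝ, 0 ≤ l → l ≤ 1 →
        (genFun μ v) ^ l * (genFun μ w) ^ (1 - l) ≤ genFun μ (l • v + (1 - l) • w)) :
    ∑ i : Fin n, marginal μ i * Real.log (1 / marginal μ i) ≤ setEntropy μ := by
  set M := ∑ i, marginal μ i
  have hS : ∀ S, μ S * log (μ S) ≤ μ S * (∑ i ∈ S, log (marginal μ i) + (S.card - M)) := by
    intro S
    rcases (hnn S).eq_or_lt with h | h
    · simp [← h]
    · exact mul_le_mul_of_nonneg_left (log_le_sum_log_marginal_add μ hnn hsum hlc h) h.le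
  simp only [setEntropy, one_div, log_inv, mul_neg, sum_neg_distrib, neg_le_neg_iff]
  calc ∑ S, μ S * log (μ S)
      ≤ ∑ S, μ S * (∑ i ∈ S, log (marginal μ i) + (S.card - M)) := sum_le_sum fun S _ => hS S
    _ = ∑ S, μ S * ∑ i ∈ S, log (marginal μ i) + (∑ S, μ S * S.card - (∑ S, μ S) * M) := by
        simp only [mul_add, mul_sub, sum_add_distrib, sum_sub_distrib, sum_mul]
    _ = ∑ i, marginal μ i * log (marginal μ i) := by
        rw [sum_mul_sum_eq_sum_marginal_mul, sum_mul_card_eq_sum_marginal, hsum]; ring
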